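/- Let F^λ[G] be an upper or lower Lie nilpotent twisted group algebra over a field of characteristic p > 0 and suppose g, h ∈ G commute. Then the basis elements commute as well: [g̃, h̃] = 0, equivalently λ(g,h) = λ(h,g). -/

import Mathlib

/-!
Put `a = g̃` and `b = h̃`. Since `gh = hg`, both `ab` and `ba` are multiples of `(gh)~`, so
`ba - ab = e • ab` with `e = (λ(h,g) - λ(g,h)) / λ(g,h)`, and then `ad_a^k (ab) = e^k • a^(k+1) b`
where `ad_a x = x a - a x`. Both Lie power series contain the lower Lie central series, so Lie
nilpotency forces `ad_a^m = 0` for some `m`. As `a` and `b` are units, `e^m = 0`, hence `e = 0`.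
-/

/-- Additive subgroup generated by products `s * t` with `s ∈ S`, `t ∈ T`. -/
def aprod {R : Type*} [NonUnitalRing R] (S T : AddSubgroup R) : AddSubgroup R :=
  AddSubgroup.closure {x : R | ∃ s ∈ S, ∃ t ∈ T, x = s * t}

/-- Additive subgroup generated by Lie commutators `s*t - t*s`. -/
def lbrk {R : Type*} [NonUnitalRing R] (S T : AddSubgroup R) : AddSubgroup R :=
  AddSubgroup.closure {x : R | ∃ s ∈ S, ∃ t ∈ T, x = s * t - t * s}

/-- The lower Lie central series `γ₁(R) = R`, `γₙ(R) = [γₙ₋₁(R), R]`. -/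
def lieGamma (R : Type*) [NonUnitalRing R] : ℕ → AddSubgroup R
  | 0 => ⊤
  | 1 => ⊤
  | n + 2 => lbrk (lieGamma R (n + 1)) ⊤

/-- The `n`-th lower Lie power `R^[n] = γₙ(R)·R`. -/
def lowerLiePow (R : Type*) [NonUnitalRing R] (n : ℕ) : AddSubgroup R :=
  aprod (lieGamma R n) ⊤

/-- The `n`-th upper Lie power: `R^(1) = R`, `R^(n) = [R^(n-1), R]·R`. -/
def upperLiePow (R : Type*) [NonUnitalRing R] : ℕ → AddSubgroup R
  | 0 => ⊤
  | 1 => ⊤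
  | n + 2 => aprod (lbrk (upperLiePow R (n + 1)) ⊤) ⊤

section LieCentralSeries

variable {R : Type*}

lemma lbrk_mono [NonUnitalRing R] {S S' : AddSubgroup R} (hSS' : S ≤ S') (T : AddSubgroup R) :
    lbrk S T ≤ lbrk S' T := by
  apply AddSubgroup.closure_mono
  rintro x ⟨s, hs, t, ht, rfl⟩
  exact ⟨s, hSS' hs, t, ht, rfl⟩

lemma commutator_mem_lbrk [NonUnitalRing R] {S T : AddSubgroup R} {s t : R} (hs : s ∈ S)
    (ht : t ∈ T) : s * t - t * s ∈ lbrk S T :=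
  AddSubgroup.subset_closure ⟨s, hs, t, ht, rfl⟩

lemma lieGamma_succ_le [NonUnitalRing R] : ∀ n, lieGamma R (n + 1) ≤ lieGamma R n
  | 0 => le_rfl
  | 1 => le_top
  | n + 2 => lbrk_mono (lieGamma_succ_le (n + 1)) ⊤

lemma iterate_commutator_mem_lieGamma [NonUnitalRing R] (y x : R) :
    ∀ k, (fun z => z * y - y * z)^[k] x ∈ lieGamma R (k + 1)
  | 0 => AddSubgroup.mem_top x
  | k + 1 => by
    rw [Function.iterate_succ_apply']
    exact commutator_mem_lbrk (iterate_commutator_mem_lieGamma y x k) (AddSubgroup.mem_top y)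

lemma iterate_commutator_eq_zero_of_lieGamma_eq_bot [NonUnitalRing R] {m : ℕ}
    (hm : lieGamma R m = ⊥) (y x : R) : (fun z => z * y - y * z)^[m] x = 0 := by
  have hmem := lieGamma_succ_le m (iterate_commutator_mem_lieGamma y x m)
  rwa [hm, AddSubgroup.mem_bot] at hmem

lemma le_aprod_top [Ring R] (S : AddSubgroup R) : S ≤ aprod S ⊤ :=
  fun x hx => AddSubgroup.subset_closure ⟨x, hx, 1, trivial, (mul_one x).symm⟩

lemma lieGamma_le_upperLiePow [Ring R] : ∀ n, lieGamma R n ≤ upperLiePow R n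
  | 0 => le_rfl
  | 1 => le_rfl
  | n + 2 => (lbrk_mono (lieGamma_le_upperLiePow (n + 1)) ⊤).trans (le_aprod_top _)

lemma exists_lieGamma_eq_bot [Ring R]
    (hLie : ∃ m : ℕ, lowerLiePow R m = ⊥ ∨ upperLiePow R m = ⊥) : ∃ m, lieGamma R m = ⊥ := by
  obtain ⟨m, hm | hm⟩ := hLie
  · exact ⟨m, le_bot_iff.mp (hm ▸ le_aprod_top (lieGamma R m))⟩
  · exact ⟨m, le_bot_iff.mp (hm ▸ lieGamma_le_upperLiePow m)⟩

end LieCentralSeries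

section SkewCommuting

variable {A : Type*} [Ring A]

lemma iterate_commutator_mul_of_commutator_eq_smul {R : Type*} [CommRing R] [Algebra R A]
    {a b : A} {e : R} (hba : b * a - a * b = e • (a * b)) (k : ℕ) :
    (fun z => z * a - a * z)^[k] (a * b) = e ^ k • (a ^ (k + 1) * b) := by
  induction k with
  | zero => simp
  | succ k ih =>
    rw [Function.iterate_succ_apply', ih]
    calc e ^ k • (a ^ (k + 1) * b) * a - a * e ^ k • (a ^ (k + 1) * b)
        = e ^ k • (a ^ (k + 1) * (b * a - a * b)) := by
          rw [smul_mul_assoc, mul_smul_comm, ← smul_sub]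
          simp only [mul_sub, ← mul_assoc, ← pow_succ, ← pow_succ']
      _ = e ^ (k + 1) • (a ^ (k + 2) * b) := by
          rw [hba, mul_smul_comm, smul_smul, ← pow_succ, ← mul_assoc, ← pow_succ]

lemma eq_zero_of_commutator_eq_smul_of_iterate_eq_zero {F : Type*} [Field F] [Nontrivial A]
    [Algebra F A] {a b : A} {e : F} (ha : IsUnit a) (hb : IsUnit b)
    (hba : b * a - a * b = e • (a * b)) {m : ℕ} (hm : (fun z => z * a - a * z)^[m] (a * b) = 0) :
    e = 0 := by
  rw [iterate_commutator_mul_of_commutator_eq_smul hba, smul_eq_zero] at hm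
  exact IsNilpotent.eq_zero ⟨m, hm.resolve_right ((ha.pow _).mul hb).ne_zero⟩

end SkewCommuting

lemma isUnit_of_mul_eq_smul {F G A : Type*} [Field F] [Group G] [Ring A] [Algebra F A]
    (l : G → G → Fˣ) {B : G → A} (hone : B 1 = 1)
    (hmul : ∀ g h : G, B g * B h = (l g h : F) • B (g * h)) (g : G) : IsUnit (B g) := by
  refine isUnit_iff_exists_and_exists.mpr
    ⟨⟨(l g g⁻¹ : F)⁻¹ • B g⁻¹, ?_⟩, ⟨(l g⁻¹ g : F)⁻¹ • B g⁻¹, ?_⟩⟩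
  · rw [mul_smul_comm, hmul, mul_inv_cancel, hone, smul_smul, inv_mul_cancel₀ (l g g⁻¹).ne_zero,
      one_smul]
  · rw [smul_mul_assoc, hmul, inv_mul_cancel, hone, smul_smul, inv_mul_cancel₀ (l g⁻¹ g).ne_zero,
      one_smul]

theorem stmt_13_general {F : Type*} [Field F] {G : Type*} [Group G]
    {A : Type*} [Ring A] [Algebra F A]
    (l : G → G → Fˣ) (B : Module.Basis G F A)
    (hone : B 1 = 1)
    (hmul : ∀ g h : G, B g * B h = ((l g h : F)) • B (g * h))
    (hLie : ∃ m : ℕ, lowerLiePow A m = ⊥ ∨ upperLiePow A m = ⊥)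
    (g h : G) (hgh : g * h = h * g) :
    ⁅B g, B h⁆ = 0 ∧ l g h = l h g := by
  have : Nontrivial A := ⟨⟨B 1, 0, B.ne_zero 1⟩⟩
  obtain ⟨m, hm⟩ := exists_lieGamma_eq_bot hLie
  set e : F := ((l h g : F) - l g h) * (l g h : F)⁻¹ with he_def
  have hba : B h * B g - B g * B h = e • (B g * B h) := by
    rw [hmul, hmul, hgh, smul_smul, ← sub_smul, he_def, mul_assoc, inv_mul_cancel₀ (l g h).ne_zero,
      mul_one]
  have he : e = 0 :=
    eq_zero_of_commutator_eq_smul_of_iterate_eq_zero (isUnit_of_mul_eq_smul l hone hmul g)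
      (isUnit_of_mul_eq_smul l hone hmul h) hba
      (iterate_commutator_eq_zero_of_lieGamma_eq_bot hm _ _)
  have hl : l g h = l h g := by
    rw [mul_eq_zero, inv_eq_zero, or_iff_left (l g h).ne_zero, sub_eq_zero] at he
    exact Units.ext he.symm
  refine ⟨?_, hl⟩
  rw [Ring.lie_def, hmul, hmul, hgh, hl, sub_self]

/-- In an upper or lower Lie nilpotent twisted group algebra of characteristic
`p > 0`, commuting group elements have commuting basis elements:
`[g̃, h̃] = 0`, i.e. `λ(g,h) = λ(h,g)`. -/
theorem stmt_13 {F : Type*} [Field F] {G : Type*} [Group G]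
    {A : Type*} [Ring A] [Algebra F A]
    (l : G → G → Fˣ) (B : Module.Basis G F A)
    (hone : B 1 = 1)
    (hmul : ∀ g h : G, B g * B h = ((l g h : F)) • B (g * h))
    (hcoc : ∀ a b c : G, l a (b * c) * l b c = l (a * b) c * l a b)
    (hnorm : ∀ g : G, l g 1 = 1 ∧ l 1 g = 1)
    (p : ℕ) [Fact p.Prime] [CharP F p]
    (hLie : ∃ m : ℕ, lowerLiePow A m = ⊥ ∨ upperLiePow A m = ⊥)
    (g h : G) (hgh : g * h = h * g) :
    ⁅B g, B h⁆ = 0 ∧ l g h = l h g :=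
  stmt_13_general l B hone hmul hLie g h hgh
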